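/- arXiv:math/0311054 — 6 statements merged into one kernel-verified Lean document; each statement's English description precedes it below -/
import Mathlib

section
/- Let E be a Euclidean affine space over a real inner product space, and let ε be a real number with 0 < ε ≤ π. If x, y, z ∈ E are points such that the undirected angle ∠(x, z, y) at z is at least ε, then max(dist(x, z), dist(y, z)) ≤ (1 / sin(ε/2)) · dist(x, y). -/
/-! Writing `a, b` for the sides at the vertex and `θ` for the angle between them, the law of
cosines together with `cos θ = 1 - 2 sin² (θ / 2)` gives the opposite side as
`c² = (a - b)² + 4ab sin² (θ / 2)`, and this is at least `a² sin² (θ / 2)`. Hence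
`a sin (θ / 2) ≤ c`, and `sin (θ / 2) ≥ sin (ε / 2) > 0` because `0 < ε / 2 ≤ θ / 2 ≤ π / 2`. -/

open Real EuclideanGeometry

theorem mul_sq_le_sub_sq_add_four_mul_mul_sq {a b s : ℝ} (ha : 0 ≤ a) (hb : 0 ≤ b)
    (hs : s ^ 2 ≤ 1) : (a * s) ^ 2 ≤ (a - b) ^ 2 + 4 * a * b * s ^ 2 := by
  -- the difference of the two sides is `(1 - s²)(a - b)² + 2ab s² + b² s²`
  nlinarith [mul_nonneg (sub_nonneg.2 hs) (sq_nonneg (a - b)),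
    mul_nonneg (mul_nonneg ha hb) (sq_nonneg s), mul_nonneg (sq_nonneg b) (sq_nonneg s)]

namespace InnerProductGeometry

variable {V : Type*} [NormedAddCommGroup V] [InnerProductSpace ℝ V]

theorem norm_sub_sq_eq_sub_sq_add_four_mul_sin_half_angle_sq (x y : V) :
    ‖x - y‖ ^ 2 =
      (‖x‖ - ‖y‖) ^ 2 + 4 * ‖x‖ * ‖y‖ * sin (angle x y / 2) ^ 2 := by
  have hcos : cos (angle x y) = 1 - 2 * sin (angle x y / 2) ^ 2 := by
    rw [← cos_two_mul_eq_one_sub, mul_div_cancel₀ _ two_ne_zero]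
  rw [sq, norm_sub_sq_eq_norm_sq_add_norm_sq_sub_two_mul_norm_mul_norm_mul_cos_angle, hcos]
  ring

theorem norm_mul_sin_half_angle_le_norm_sub (x y : V) :
    ‖x‖ * sin (angle x y / 2) ≤ ‖x - y‖ := by
  refine abs_le_of_sq_le_sq' ?_ (norm_nonneg _) |>.2
  rw [norm_sub_sq_eq_sub_sq_add_four_mul_sin_half_angle_sq]
  exact mul_sq_le_sub_sq_add_four_mul_mul_sq (norm_nonneg x) (norm_nonneg y)
    (sin_sq_le_one _)

end InnerProductGeometry

namespace EuclideanGeometry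

variable {V P : Type*} [NormedAddCommGroup V] [InnerProductSpace ℝ V] [MetricSpace P]
  [NormedAddTorsor V P]

theorem dist_mul_sin_half_angle_le_dist (x y z : P) :
    dist x z * sin (∠ x z y / 2) ≤ dist x y := by
  rw [dist_eq_norm_vsub V x z, dist_eq_norm_vsub V x y, ← vsub_sub_vsub_cancel_right x y z]
  exact InnerProductGeometry.norm_mul_sin_half_angle_le_norm_sub _ _

end EuclideanGeometry

theorem angle_lower_bound_side_bound
    {V P : Type} [NormedAddCommGroup V] [InnerProductSpace ℝ V]
    [MetricSpace P] [NormedAddTorsor V P]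
    (ε : ℝ) (hε0 : 0 < ε) (hεπ : ε ≤ π)
    (x y z : P) (h : ε ≤ EuclideanGeometry.angle x z y) :
    max (dist x z) (dist y z) ≤ (1 / Real.sin (ε / 2)) * dist x y := by
  have hsin_pos : 0 < sin (ε / 2) := sin_pos_of_pos_of_lt_pi (by linarith) (by linarith [pi_pos])
  have side_bound (p q : P) (hpq : ε ≤ ∠ p z q) :
      dist p z ≤ 1 / sin (ε / 2) * dist p q := by
    have hsin_le : sin (ε / 2) ≤ sin (∠ p z q / 2) :=
      sin_le_sin_of_le_of_le_pi_div_two (by linarith [pi_pos])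
        (by linarith [angle_le_pi p z q]) (by linarith)
    rw [one_div_mul_eq_div, le_div_iff₀ hsin_pos]
    calc dist p z * sin (ε / 2) ≤ dist p z * sin (∠ p z q / 2) := by gcongr
      _ ≤ dist p q := dist_mul_sin_half_angle_le_dist p q z
  refine max_le (side_bound x y h) ?_
  rw [dist_comm x y]
  exact side_bound y x (by rwa [angle_comm])
end

section
/- Let E be a Euclidean affine space over a real inner product space, and let ε be a real number with 0 < ε ≤ π. If x, y, z ∈ E are points such that all three undirected angles ∠(y, x, z), ∠(x, y, z), ∠(x, z, y) are at least ε, then the maximum of the three pairwise distances dist(x, y), dist(y, z), dist(x, z) is at most (1 / sin(ε/2)) times the minimum of these three distances. -/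
/-!
By the law of cosines, the side opposite an angle `θ` is at least `sin (θ / 2)` times either
adjacent side. If all angles are at least `ε`, then `s = sin (ε / 2)` times any side is at most
any other side, so `s` times the longest side is at most the shortest one.
-/

open Real EuclideanGeometry

namespace EuclideanGeometry

variable {V P : Type*} [NormedAddCommGroup V] [InnerProductSpace ℝ V] [MetricSpace P]
  [NormedAddTorsor V P]

theorem dist_mul_sin_half_angle_le (p₁ p₂ p₃ : P) :
    dist p₁ p₂ * sin (∠ p₁ p₂ p₃ / 2) ≤ dist p₁ p₃ := by
  set θ := ∠ p₁ p₂ p₃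
  have hsin_nonneg : 0 ≤ sin (θ / 2) :=
    sin_nonneg_of_nonneg_of_le_pi (by linarith [angle_nonneg p₁ p₂ p₃])
      (by linarith [angle_le_pi p₁ p₂ p₃, pi_pos])
  have hsin_sq : sin (θ / 2) ^ 2 = (1 - cos θ) / 2 := by
    rw [sin_sq_eq_half_sub]; ring_nf
  have hb := dist_nonneg (x := p₁) (y := p₂)
  have hc := dist_nonneg (x := p₃) (y := p₂)
  have hcos_le := cos_le_one θ
  have hcos_ge := neg_one_le_cos θ
  -- `b² + c² - 2bct - (1 - t) b² / 2 = (c - bt)² + (1 - t)(1 + 2t) b² / 2`, and for `t < -1/2`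
  -- every term of the left-hand side is already nonnegative.
  have hsq : (dist p₁ p₂ * sin (θ / 2)) ^ 2 ≤ dist p₁ p₃ ^ 2 := by
    rw [mul_pow, hsin_sq, sq, sq, law_cos p₁ p₂ p₃]
    nlinarith [sq_nonneg (dist p₃ p₂ - dist p₁ p₂ * cos θ),
      mul_nonneg (mul_nonneg hb hc) (sub_nonneg.2 hcos_le),
      mul_nonneg (sq_nonneg (dist p₁ p₂))
        (mul_nonneg (sub_nonneg.2 hcos_le) (neg_le_iff_add_nonneg.1 hcos_ge))]
  exact (pow_le_pow_iff_left₀ (mul_nonneg hb hsin_nonneg) dist_nonneg two_ne_zero).1 hsq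

theorem dist_mul_sin_half_le_of_le_angle {ε : ℝ} {p₁ p₂ p₃ : P} (hε : 0 ≤ ε)
    (h : ε ≤ ∠ p₁ p₂ p₃) : dist p₁ p₂ * sin (ε / 2) ≤ dist p₁ p₃ := by
  refine le_trans ?_ (dist_mul_sin_half_angle_le p₁ p₂ p₃)
  gcongr
  apply sin_le_sin_of_le_of_le_pi_div_two <;> linarith [angle_le_pi p₁ p₂ p₃, pi_pos]

end EuclideanGeometry

theorem max_dist_le_min_dist_of_angles_ge_general
    {V P : Type} [NormedAddCommGroup V] [InnerProductSpace ℝ V]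
    [MetricSpace P] [NormedAddTorsor V P]
    (ε : ℝ) (hε0 : 0 < ε)
    (x y z : P)
    (h₁ : ε ≤ EuclideanGeometry.angle y x z)
    (h₂ : ε ≤ EuclideanGeometry.angle x y z)
    (h₃ : ε ≤ EuclideanGeometry.angle x z y) :
    max (dist x y) (max (dist y z) (dist x z)) ≤
      (1 / Real.sin (ε / 2)) * min (dist x y) (min (dist y z) (dist x z)) := by
  set s := sin (ε / 2)
  have hs : 0 < s :=
    sin_pos_of_pos_of_lt_pi (by linarith) (by linarith [angle_le_pi x y z, pi_pos])
  have le_self (d : ℝ) (hd : 0 ≤ d) : d * s ≤ d := mul_le_of_le_one_right hd (sin_le_one _)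
  have hx₁ := dist_mul_sin_half_le_of_le_angle hε0.le h₁
  have hx₂ := dist_mul_sin_half_le_of_le_angle hε0.le (angle_comm y x z ▸ h₁)
  have hy₁ := dist_mul_sin_half_le_of_le_angle hε0.le h₂
  have hy₂ := dist_mul_sin_half_le_of_le_angle hε0.le (angle_comm x y z ▸ h₂)
  have hz₁ := dist_mul_sin_half_le_of_le_angle hε0.le h₃
  have hz₂ := dist_mul_sin_half_le_of_le_angle hε0.le (angle_comm x z y ▸ h₃)
  simp only [dist_comm y x, dist_comm z x, dist_comm z y] at hx₁ hx₂ hy₂ hz₂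
  rw [one_div, inv_mul_eq_div, le_div_iff₀ hs, max_mul_of_nonneg _ _ hs.le,
    max_mul_of_nonneg _ _ hs.le]
  simp only [max_le_iff, le_min_iff]
  exact ⟨⟨le_self _ dist_nonneg, hz₂, hz₁⟩, ⟨hx₁, le_self _ dist_nonneg, hx₂⟩,
    ⟨hy₁, hy₂, le_self _ dist_nonneg⟩⟩

theorem max_dist_le_min_dist_of_angles_ge
    {V P : Type} [NormedAddCommGroup V] [InnerProductSpace ℝ V]
    [MetricSpace P] [NormedAddTorsor V P]
    (ε : ℝ) (hε0 : 0 < ε) (hεπ : ε ≤ π)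
    (x y z : P)
    (h₁ : ε ≤ EuclideanGeometry.angle y x z)
    (h₂ : ε ≤ EuclideanGeometry.angle x y z)
    (h₃ : ε ≤ EuclideanGeometry.angle x z y) :
    max (dist x y) (max (dist y z) (dist x z)) ≤
      (1 / Real.sin (ε / 2)) * min (dist x y) (min (dist y z) (dist x z)) :=
  max_dist_le_min_dist_of_angles_ge_general (V := V) ε hε0 x y z h₁ h₂ h₃
end

section
/- For every real ε with 0 < ε ≤ π/2 there exists a constant C > 0, depending only on ε, with the following property. Let V be a real inner product space and let x, y, z ∈ V be unit vectors. For unit vectors u, v define the spherical distance d_S(u, v) := arccos⟪u, v⟫ ∈ [0, π]. Suppose that the spherical angle at z, namely the angle (in the sense of InnerProductGeometry.angle, valued in [0, π]) between the tangent vectors x − ⟪x, z⟫·z and y − ⟪y, z⟫·z, is at least ε, and that the perimeter satisfies d_S(x, y) + d_S(y, z) + d_S(z, x) ≤ 2π − ε. Then max(d_S(x, z), d_S(y, z)) ≤ C · d_S(x, y). -/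
/-!
By the spherical law of cosines, an angle `γ ≥ ε` at `z` gives
`cos c ≤ cos a cos b + sin a sin b cos ε` for the sides `a = d(x, z)`, `b = d(y, z)` and
`c = d(x, y)`. Splitting the right-hand side along `cos (a - b)` and `cos (a + b)` turns this into
`sin (ε / 2) * sin ((a + b) / 2) ≤ sin (c / 2) ≤ c / 2`. The perimeter bound keeps
`(a + b) / 2 ≤ π - ε / 2` away from `π`, where `sin` is bounded below by a multiple of its
argument, so `a + b ≤ π / sin (ε / 2) ^ 2 * c`.
-/

open Real InnerProductGeometry

lemma sin_sq_half (x : ℝ) : sin (x / 2) ^ 2 = (1 - cos x) / 2 := by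
  rw [sin_sq, cos_sq, mul_div_cancel₀ x two_ne_zero]
  ring

lemma sin_div_pi_mul_le_sin {δ s : ℝ} (hδ : 0 ≤ δ) (hs : 0 ≤ s) (hsδ : s ≤ π - δ) :
    sin δ / π * s ≤ sin s := by
  have hπ : 0 < π := pi_pos
  rcases le_total s (π / 2) with hs2 | hs2
  · calc sin δ / π * s ≤ 2 / π * s := by gcongr; linarith [sin_le_one δ]
      _ ≤ sin s := mul_le_sin hs hs2
  · have hδs : sin δ ≤ sin s := by
      rw [← sin_pi_sub s]
      exact sin_le_sin_of_le_of_le_pi_div_two (by linarith) (by linarith) (by linarith)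
    have hsπ : s / π ≤ 1 := by rw [div_le_one hπ]; linarith
    calc sin δ / π * s = sin δ * (s / π) := by ring
      _ ≤ sin δ * 1 := by gcongr; exact sin_nonneg_of_nonneg_of_le_pi hδ (by linarith)
      _ ≤ sin s := by linarith

lemma sin_half_mul_sin_half_add_le_sin_half {a b c ε : ℝ} (hc : 0 ≤ c) (hcπ : c ≤ 2 * π)
    (h : cos c ≤ cos a * cos b + sin a * sin b * cos ε) :
    sin (ε / 2) * sin ((a + b) / 2) ≤ sin (c / 2) := by
  have hsq : (sin (ε / 2) * sin ((a + b) / 2)) ^ 2 ≤ sin (c / 2) ^ 2 := by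
    rw [mul_pow, sin_sq_half, sin_sq_half, sin_sq_half, cos_add]
    have hdrop : 0 ≤ (1 - cos (a - b)) * (1 + cos ε) :=
      mul_nonneg (sub_nonneg.2 (cos_le_one _)) (by linarith [neg_one_le_cos ε])
    rw [cos_sub] at hdrop
    linear_combination h / 2 + hdrop / 4
  exact (abs_le_of_sq_le_sq hsq (sin_nonneg_of_nonneg_of_le_pi (by linarith) (by linarith))).trans'
    (le_abs_self _)

lemma add_le_div_sin_half_sq_mul_of_cos_le {a b c ε : ℝ} (hε0 : 0 < ε) (hε : ε ≤ π)
    (ha : 0 ≤ a) (hb : 0 ≤ b) (hc : 0 ≤ c) (hcπ : c ≤ 2 * π) (hab : a + b ≤ 2 * π - ε)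
    (h : cos c ≤ cos a * cos b + sin a * sin b * cos ε) :
    a + b ≤ π / sin (ε / 2) ^ 2 * c := by
  have hsin : 0 < sin (ε / 2) := sin_pos_of_pos_of_lt_pi (by positivity) (by linarith)
  have hlin : sin (ε / 2) / π * ((a + b) / 2) ≤ sin ((a + b) / 2) :=
    sin_div_pi_mul_le_sin (by positivity) (by positivity) (by linarith)
  have hhalf : sin (ε / 2) * sin ((a + b) / 2) ≤ c / 2 :=
    (sin_half_mul_sin_half_add_le_sin_half hc hcπ h).trans (sin_le (by positivity))
  rw [div_mul_eq_mul_div, le_div_iff₀ (by positivity)]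
  calc (a + b) * sin (ε / 2) ^ 2
        = 2 * π * (sin (ε / 2) * (sin (ε / 2) / π * ((a + b) / 2))) := by field_simp
    _ ≤ 2 * π * (sin (ε / 2) * sin ((a + b) / 2)) := by gcongr
    _ ≤ 2 * π * (c / 2) := by gcongr
    _ = π * c := by ring

section SphericalTriangle

variable {V : Type*} [NormedAddCommGroup V] [InnerProductSpace ℝ V] {x y z : V}

lemma inner_sub_inner_smul_sub_inner_smul (hz : ‖z‖ = 1) :
    inner ℝ (x - inner ℝ x z • z) (y - inner ℝ y z • z) =
      inner ℝ x y - inner ℝ x z * inner ℝ y z := by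
  have hzz : inner ℝ z z = (1 : ℝ) := by rw [real_inner_self_eq_norm_sq, hz, one_pow]
  simp only [inner_sub_left, inner_sub_right, real_inner_smul_left, real_inner_smul_right, hzz,
    real_inner_comm z]
  ring

lemma norm_sub_inner_smul_eq_sin_arccos (hx : ‖x‖ = 1) (hz : ‖z‖ = 1) :
    ‖x - inner ℝ x z • z‖ = sin (arccos (inner ℝ x z)) := by
  rw [norm_eq_sqrt_real_inner, inner_sub_inner_smul_sub_inner_smul hz, real_inner_self_eq_norm_sq,
    hx, sin_arccos]
  ring_nf

lemma cos_arccos_inner_of_norm_eq_one (hx : ‖x‖ = 1) (hy : ‖y‖ = 1) :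
    cos (arccos (inner ℝ x y)) = inner ℝ x y := by
  have h := abs_real_inner_le_norm x y
  rw [hx, hy, one_mul, abs_le] at h
  exact cos_arccos h.1 h.2

theorem spherical_law_cos (hx : ‖x‖ = 1) (hy : ‖y‖ = 1) (hz : ‖z‖ = 1) :
    cos (arccos (inner ℝ x y)) =
      cos (arccos (inner ℝ x z)) * cos (arccos (inner ℝ y z)) +
        sin (arccos (inner ℝ x z)) * sin (arccos (inner ℝ y z)) *
          cos (angle (x - inner ℝ x z • z) (y - inner ℝ y z • z)) := by
  rw [cos_arccos_inner_of_norm_eq_one hx hy, cos_arccos_inner_of_norm_eq_one hx hz,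
    cos_arccos_inner_of_norm_eq_one hy hz, ← norm_sub_inner_smul_eq_sin_arccos hx hz,
    ← norm_sub_inner_smul_eq_sin_arccos hy hz, mul_comm _ (cos _), cos_angle_mul_norm_mul_norm,
    inner_sub_inner_smul_sub_inner_smul hz]
  ring

end SphericalTriangle

theorem spherical_angle_lower_bound_side_bound
    (ε : ℝ) (hε0 : 0 < ε) (hε : ε ≤ π / 2) :
    ∃ C : ℝ, 0 < C ∧
      ∀ (V : Type) [NormedAddCommGroup V] [InnerProductSpace ℝ V]
        (x y z : V), ‖x‖ = 1 → ‖y‖ = 1 → ‖z‖ = 1 →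
        ε ≤ InnerProductGeometry.angle
              (x - (inner ℝ x z) • z) (y - (inner ℝ y z) • z) →
        Real.arccos (inner ℝ x y) + Real.arccos (inner ℝ y z) +
            Real.arccos (inner ℝ z x) ≤ 2 * π - ε →
        max (Real.arccos (inner ℝ x z)) (Real.arccos (inner ℝ y z)) ≤
          C * Real.arccos (inner ℝ x y) := by
  have hsin : 0 < sin (ε / 2) := sin_pos_of_pos_of_lt_pi (by positivity) (by linarith [pi_pos])
  refine ⟨π / sin (ε / 2) ^ 2, by positivity, fun V _ _ x y z hx hy hz hangle hperim => ?_⟩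
  have hcos : cos (arccos (inner ℝ x y)) ≤
      cos (arccos (inner ℝ x z)) * cos (arccos (inner ℝ y z)) +
        sin (arccos (inner ℝ x z)) * sin (arccos (inner ℝ y z)) * cos ε := by
    have hsin_arccos (t : ℝ) : 0 ≤ sin (arccos t) :=
      sin_nonneg_of_nonneg_of_le_pi (arccos_nonneg t) (arccos_le_pi t)
    rw [spherical_law_cos hx hy hz]
    gcongr
    · exact mul_nonneg (hsin_arccos _) (hsin_arccos _)
    · exact cos_le_cos_of_nonneg_of_le_pi hε0.le (angle_le_pi _ _) hangle
  rw [real_inner_comm x z] at hperim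
  have hsum := add_le_div_sin_half_sq_mul_of_cos_le hε0 (by linarith [pi_pos]) (arccos_nonneg _)
    (arccos_nonneg _) (arccos_nonneg _) (by linarith [arccos_le_pi (inner ℝ x y), pi_pos])
    (by linarith [arccos_nonneg (inner ℝ x y)]) hcos
  exact max_le (by linarith [arccos_nonneg (inner ℝ y z)])
    (by linarith [arccos_nonneg (inner ℝ x z)])
end

section
/- Let q ≥ 1 be a natural number and let G be a connected simple graph on a finite vertex type V with |V| = K, such that every vertex of G has degree at most q and 4q ≤ K. Then there exist two disjoint nonempty sets of vertices V₁ and V₂ with V₁ ∪ V₂ = V such that the subgraph of G induced on V₁ and the subgraph of G induced on V₂ are both connected, and (|Vᵢ| : ℝ) ≥ K/(2q) for i = 1, 2. -/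
/-!
Work with splittings `V = A ∪ Aᶜ` where `G[A]` is connected and `G[Aᶜ]` is preconnected (so
`A = V` is allowed), and shrink `A` while `2|A| ≥ |V| + 2`. Choose `a ∈ A` adjacent to `Aᶜ`.
Every component of `G[A \ {a}]` contains a neighbour of `a`, so there are at most `q` of them
and the largest one, `D`, satisfies `|A| ≤ q|D| + 1`; its complement is `a`, `Aᶜ` and the other
components, all attached to `a`, hence connected. The invariant `|V| ≤ 2q|A|` survives each
step, and when the process stops both sides have at least `|V|/(2q)` vertices. For `q = 1`
there is nothing to prove: a connected graph of maximal degree one has at most two vertices.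
-/

namespace SimpleGraph

variable {V : Type*} {G : SimpleGraph V}

lemma ConnectedComponent.connected_induce_image_val_supp {s : Set V}
    (c : (G.induce s).ConnectedComponent) : (G.induce ((↑) '' c.supp)).Connected := by
  refine c.connected_toSimpleGraph.map
    (induceHom (Embedding.induce s).toHom (Set.mapsTo_image _ _)) ?_
  rintro ⟨_, x, hx, rfl⟩
  exact ⟨⟨x, hx⟩, rfl⟩

lemma ConnectedComponent.exists_adj_of_induce_diff_singleton {A : Set V} {a : V}
    (hA : (G.induce A).Connected) (ha : a ∈ A) (c : (G.induce (A \ {a})).ConnectedComponent) :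
    ∃ y ∈ c.supp, G.Adj a y := by
  obtain ⟨⟨x, hx⟩, rfl⟩ := c.exists_rep
  -- A walk in `G[A]` from `x` to `a` leaves the component of `x`, and can only do so into `a`.
  let S : Set A :=
    {v | ∃ h : v.1 ∈ A \ {a}, (G.induce (A \ {a})).Reachable ⟨v, h⟩ ⟨x, hx⟩}
  obtain ⟨d, -, ⟨hfst, hreach⟩, hsnd⟩ :=
    (hA.preconnected ⟨x, hx.1⟩ ⟨a, ha⟩).some.exists_boundary_dart S ⟨hx, .refl _⟩
      fun ⟨h, _⟩ => h.2 rfl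
  by_cases hsnd_a : d.snd.1 = a
  · exact ⟨⟨d.fst, hfst⟩, ConnectedComponent.sound hreach, hsnd_a ▸ d.adj.symm⟩
  · have hadj : (G.induce (A \ {a})).Adj ⟨d.snd, d.snd.2, hsnd_a⟩ ⟨d.fst, hfst⟩ :=
      d.adj.symm
    exact (hsnd ⟨⟨d.snd.2, hsnd_a⟩, hadj.reachable.trans hreach⟩).elim

lemma card_connectedComponent_induce_diff_singleton_le {A : Set V} {a : V}
    [Finite (G.neighborSet a)] (hA : (G.induce A).Connected) (ha : a ∈ A) :
    Nat.card (G.induce (A \ {a})).ConnectedComponent ≤ Nat.card (G.neighborSet a) := by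
  choose y hyc hya using ConnectedComponent.exists_adj_of_induce_diff_singleton hA ha
  refine Nat.card_le_card_of_injective (fun c => ⟨y c, hya c⟩) fun c c' h => ?_
  have : y c = y c' := Subtype.ext (Subtype.mk.inj h)
  rw [← (ConnectedComponent.mem_supp_iff _ _).1 (hyc c),
    ← (ConnectedComponent.mem_supp_iff _ _).1 (hyc c'), this]

lemma exists_card_le_card_connectedComponent_mul_ncard_supp [Finite V] [Nonempty V] :
    ∃ c : G.ConnectedComponent, Nat.card V ≤ Nat.card G.ConnectedComponent * c.supp.ncard := by
  classical
  cases nonempty_fintype V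
  obtain ⟨c, hc⟩ := Finite.exists_max fun c : G.ConnectedComponent => c.supp.ncard
  refine ⟨c, ?_⟩
  calc Nat.card V = ∑ c' : G.ConnectedComponent, c'.supp.ncard := by
        rw [← Nat.card_congr (Equiv.sigmaFiberEquiv G.connectedComponentMk), Nat.card_sigma]
        rfl
    _ ≤ ∑ _c' : G.ConnectedComponent, c.supp.ncard := Finset.sum_le_sum fun c' _ => hc c'
    _ = _ := by simp [Nat.card_eq_fintype_card]

lemma Connected.exists_mem_preconnected_induce_insert_compl (hG : G.Connected) {A : Set V}
    (hA : A.Nonempty) (hAc : (G.induce Aᶜ).Preconnected) :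
    ∃ a ∈ A, (G.induce (insert a Aᶜ)).Preconnected := by
  obtain ⟨x, hx⟩ := hA
  rcases Aᶜ.eq_empty_or_nonempty with hAc' | ⟨b, hb⟩
  · exact ⟨x, hx, by rw [hAc', insert_empty_eq]; exact .of_subsingleton⟩
  · obtain ⟨d, -, hd, hd'⟩ := (hG.preconnected x b).some.exists_boundary_dart A hx hb
    refine ⟨d.fst, hd, ?_⟩
    rw [Set.insert_eq]
    exact (connected_induce_union (s := {d.fst}) .of_subsingleton hAc rfl hd'
      d.adj).preconnected

lemma ConnectedComponent.connected_induce_compl_image_val_supp {A : Set V} {a : V}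
    (hA : (G.induce A).Connected) (ha : a ∈ A) (haAc : (G.induce (insert a Aᶜ)).Preconnected)
    (c : (G.induce (A \ {a})).ConnectedComponent) :
    (G.induce ((↑) '' c.supp)ᶜ).Connected := by
  have hD : (↑) '' c.supp ⊆ A \ {a} := Subtype.coe_image_subset _ _
  refine induce_connected_of_patches a (fun h => (hD h).2 rfl) fun {v} hv => ?_
  by_cases hvA : v ∈ insert a Aᶜ
  · refine ⟨insert a Aᶜ, ?_, Set.mem_insert _ _, hvA, haAc _ _⟩
    rintro w (rfl | hw) hwD
    exacts [(hD hwD).2 rfl, hw (hD hwD).1]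
  have hvs : v ∈ A \ {a} := by simp_all
  set c' := (G.induce (A \ {a})).connectedComponentMk ⟨v, hvs⟩
  obtain ⟨y, hy, hay⟩ := c'.exists_adj_of_induce_diff_singleton hA ha
  have hcc' : c ≠ c' := by rintro rfl; exact hv ⟨_, rfl, rfl⟩
  have hdisj : Disjoint ((↑) '' c'.supp) ((↑) '' c.supp : Set V) :=
    (Set.disjoint_image_iff Subtype.val_injective).2
      (pairwise_disjoint_supp_connectedComponent _ hcc'.symm)
  refine ⟨({a} ∪ (↑) '' c'.supp : Set V), ?_, Or.inl rfl, Or.inr ⟨_, rfl, rfl⟩,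
    (connected_induce_union (s := {a}) .of_subsingleton
      c'.connected_induce_image_val_supp.preconnected rfl ⟨y, hy, rfl⟩ hay).preconnected _ _⟩
  rintro w (rfl | hw) hwD
  exacts [(hD hwD).2 rfl, hdisj.ne_of_mem hw hwD rfl]

theorem Connected.exists_ssubset_connected_induce [Finite V] {q : ℕ} (hG : G.Connected)
    (hdeg : ∀ v, Nat.card (G.neighborSet v) ≤ q) {A : Set V} (hA : (G.induce A).Connected)
    (hAc : (G.induce Aᶜ).Preconnected) (hA2 : 2 ≤ A.ncard) :
    ∃ D ⊂ A, (G.induce D).Connected ∧ (G.induce Dᶜ).Preconnected ∧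
      A.ncard ≤ q * D.ncard + 1 := by
  obtain ⟨a, ha, haAc⟩ :=
    hG.exists_mem_preconnected_induce_insert_compl (Set.nonempty_of_ncard_ne_zero (by omega)) hAc
  have hs : (A \ {a}).ncard + 1 = A.ncard := Set.ncard_sdiff_singleton_add_one ha
  have : Nonempty ↑(A \ {a} : Set V) := (Set.nonempty_of_ncard_ne_zero (by omega)).to_subtype
  obtain ⟨c, hc⟩ :=
    exists_card_le_card_connectedComponent_mul_ncard_supp (G := G.induce (A \ {a}))
  have hcomp : Nat.card (G.induce (A \ {a})).ConnectedComponent ≤ q :=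
    (card_connectedComponent_induce_diff_singleton_le hA ha).trans (hdeg a)
  refine ⟨(↑) '' c.supp,
    (Subtype.coe_image_subset _ _).trans_ssubset (Set.sdiff_singleton_ssubset.2 ha),
    c.connected_induce_image_val_supp,
    (c.connected_induce_compl_image_val_supp hA ha haAc).preconnected, ?_⟩
  rw [Set.ncard_image_of_injective _ Subtype.val_injective, ← hs, ← Nat.card_coe_set_eq]
  have := Nat.mul_le_mul_right c.supp.ncard hcomp
  omega

theorem Connected.exists_connected_induce_card_le [Finite V] {q : ℕ} (hG : G.Connected)
    (hdeg : ∀ v, Nat.card (G.neighborSet v) ≤ q) {A : Set V} (hA : (G.induce A).Connected)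
    (hAc : (G.induce Aᶜ).Preconnected) (hAV : Nat.card V ≤ 2 * q * A.ncard) :
    ∃ B : Set V, (G.induce B).Connected ∧ (G.induce Bᶜ).Preconnected ∧
      Nat.card V ≤ 2 * q * B.ncard ∧ (B.ncard ≤ 1 ∨ 2 * B.ncard ≤ Nat.card V + 1) := by
  induction hn : A.ncard using Nat.strong_induction_on generalizing A with
  | _ n ih =>
  by_cases hsmall : A.ncard ≤ 1 ∨ 2 * A.ncard ≤ Nat.card V + 1
  · exact ⟨A, hA, hAc, hAV, hsmall⟩
  push Not at hsmall
  obtain ⟨D, hDA, hD, hDc, hAD⟩ := hG.exists_ssubset_connected_induce hdeg hA hAc (by omega)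
  exact ih _ (hn ▸ Set.ncard_lt_ncard hDA) hD hDc (by nlinarith) rfl

theorem Connected.card_le_two_of_card_neighborSet_le_one [Finite V] (hG : G.Connected)
    (hdeg : ∀ v, Nat.card (G.neighborSet v) ≤ 1) : Nat.card V ≤ 2 := by
  classical
  cases nonempty_fintype V
  have hE := hG.card_vert_le_card_edgeSet_add_one
  have hdeg_sum : ∑ v, G.degree v ≤ Fintype.card V :=
    calc ∑ v, G.degree v ≤ ∑ _v : V, 1 := Finset.sum_le_sum fun v _ => by
          rw [← card_neighborSet_eq_degree, ← Nat.card_eq_fintype_card]; exact hdeg v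
      _ = Fintype.card V := by simp
  rw [sum_degrees_eq_twice_card_edges] at hdeg_sum
  rw [Nat.card_eq_fintype_card, Nat.card_eq_fintype_card, ← edgeFinset_card] at hE
  rw [Nat.card_eq_fintype_card]
  omega

end SimpleGraph

theorem split_connected_graph_in_two
    {V : Type} [Fintype V] (G : SimpleGraph V) (q K : ℕ)
    (hq : 1 ≤ q) (hK : Fintype.card V = K)
    (hconn : G.Connected)
    (hdeg : ∀ v : V, Nat.card (G.neighborSet v) ≤ q)
    (hKq : 4 * q ≤ K) :
    ∃ V₁ V₂ : Set V, Disjoint V₁ V₂ ∧ V₁ ∪ V₂ = Set.univ ∧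
      V₁.Nonempty ∧ V₂.Nonempty ∧
      (G.induce V₁).Connected ∧ (G.induce V₂).Connected ∧
      (Nat.card V₁ : ℝ) ≥ (K : ℝ) / (2 * q) ∧
      (Nat.card V₂ : ℝ) ≥ (K : ℝ) / (2 * q) := by
  rw [← Nat.card_eq_fintype_card] at hK
  subst hK
  obtain rfl | hq2 : q = 1 ∨ 2 ≤ q := by omega
  · have := hconn.card_le_two_of_card_neighborSet_le_one hdeg
    omega
  obtain ⟨A, hA, hAc, hAK, hAsmall⟩ := hconn.exists_connected_induce_card_le hdeg
    ((SimpleGraph.induceUnivIso G).connected_iff.2 hconn)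
    (by rw [Set.compl_univ]; exact .of_subsingleton)
    (by rw [Set.ncard_univ]; exact Nat.le_mul_of_pos_left _ (by omega))
  have hcompl := Set.ncard_add_ncard_compl A
  have hA2 : 2 * A.ncard ≤ Nat.card V + 1 := by
    rcases hAsmall with h | h
    · nlinarith
    · omega
  have hAcK : Nat.card V ≤ 2 * q * Aᶜ.ncard := by
    have := Nat.mul_le_mul_right Aᶜ.ncard hq2
    nlinarith
  have hAcne : Aᶜ.Nonempty := Set.nonempty_of_ncard_ne_zero (by omega)
  have hbound {n : ℕ} (h : Nat.card V ≤ 2 * q * n) : (Nat.card V : ℝ) / (2 * q) ≤ n :=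
    div_le_of_le_mul₀ (by positivity) (by positivity) (by rw [mul_comm]; exact_mod_cast h)
  refine ⟨A, Aᶜ, disjoint_compl_right, Set.union_compl_self A,
    Set.nonempty_coe_sort.1 hA.nonempty, hAcne, hA,
    (SimpleGraph.connected_iff _).2 ⟨hAc, hAcne.to_subtype⟩, ?_, ?_⟩
  · rw [Nat.card_coe_set_eq]; exact hbound hAK
  · rw [Nat.card_coe_set_eq]; exact hbound hAcK
end

section
/- Let q ≥ 1 and M ≥ 2 be natural numbers, and let G be a connected simple graph on a finite vertex type V such that every vertex of G has degree at most q and M ≤ |V|. Then there exists a partition of V into nonempty sets such that each part induces a connected subgraph of G and each part has cardinality at least M and at most 2qM. -/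
/-!
Among the connected sets `S ⊆ A` with `|S| ≥ M` whose complement `A \ S` is connected or empty,
take one of minimal size, and a vertex `r ∈ S` adjacent to `A \ S` (any `r ∈ S` if `S = A`).
Every component of `S \ {r}` contains a neighbour of `r`, and cutting it off from `A` leaves a
connected set, so by minimality each such component has fewer than `M` vertices and
`|S| ≤ q (M - 1) + 1 ≤ q M`. Cutting such pieces off `A` while more than `2 q M` vertices
remain, the remainder always keeps more than `q M ≥ M` vertices.
-/

open Set

namespace SimpleGraph

variable {V : Type*} {G : SimpleGraph V} {A D S : Set V} {r x y z : V} {q M : ℕ}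

/-- The component of `y` in `G.induce D`, as a subset of `V` rather than of the subtype `D`;
it is empty when `y ∉ D`. -/
def componentIn (G : SimpleGraph V) (D : Set V) (y : V) : Set V :=
  {w | ∃ p : G.Walk y w, ∀ x ∈ p.support, x ∈ D}

lemma componentIn_subset : G.componentIn D y ⊆ D :=
  fun _ ⟨p, hp⟩ => hp _ p.end_mem_support

lemma mem_componentIn_self (hy : y ∈ D) : y ∈ G.componentIn D y :=
  ⟨.nil, by simpa⟩

lemma mem_componentIn_of_adj (hx : x ∈ G.componentIn D y) (hz : z ∈ D) (hxz : G.Adj x z) :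
    z ∈ G.componentIn D y := by
  obtain ⟨p, hp⟩ := hx
  refine ⟨p.concat hxz, fun w hw => ?_⟩
  simp only [Walk.support_concat, List.mem_append, List.mem_singleton] at hw
  rcases hw with hw | rfl
  exacts [hp w hw, hz]

lemma componentIn_eq_of_mem (hx : x ∈ G.componentIn D y) :
    G.componentIn D x = G.componentIn D y := by
  obtain ⟨p, hp⟩ := hx
  ext z
  constructor
  · rintro ⟨q, hq⟩
    refine ⟨p.append q, fun w hw => ?_⟩
    exact ((Walk.mem_support_append_iff _ _).1 hw).elim (hp w) (hq w)
  · rintro ⟨q, hq⟩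
    refine ⟨p.reverse.append q, fun w hw => ?_⟩
    rcases (Walk.mem_support_append_iff _ _).1 hw with hw | hw
    · exact hp w (by simpa using hw)
    · exact hq w hw

lemma connected_induce_componentIn (hy : y ∈ D) : (G.induce (G.componentIn D y)).Connected := by
  classical
  refine induce_connected_of_patches y (mem_componentIn_self hy) fun {w} ⟨p, hp⟩ => ?_
  refine ⟨{x | x ∈ p.support}, fun x hx => ?_, p.start_mem_support, p.end_mem_support,
    p.connected_induce_support.preconnected _ _⟩
  exact ⟨p.takeUntil x hx, fun u hu => hp u (p.support_takeUntil_subset_support hx hu)⟩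

lemma Connected.mem_componentIn (hS : (G.induce S).Connected) (hx : x ∈ S) (hy : y ∈ S) :
    y ∈ G.componentIn S x := by
  obtain ⟨p⟩ := hS.preconnected ⟨x, hx⟩ ⟨y, hy⟩
  refine ⟨(p.map (Embedding.induce S).toHom : G.Walk x y), fun w hw => ?_⟩
  obtain ⟨u, -, rfl⟩ := List.mem_map.1 (Walk.support_map _ p ▸ hw)
  exact u.2

lemma Walk.exists_adj_mem_componentIn :
    ∀ {x : V} (p : G.Walk x r), (∀ w ∈ p.support, w ∈ S) → x ≠ r →
      ∃ y ∈ G.componentIn (S \ {r}) x, G.Adj y r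
  | _, .nil, _, hx => absurd rfl hx
  | x, .cons (v := b) hxb p, hp, hx => by
    have hxD : x ∈ S \ {r} := ⟨hp x (by simp), hx⟩
    by_cases hbr : b = r
    · exact ⟨x, mem_componentIn_self hxD, hbr ▸ hxb⟩
    obtain ⟨y, hy, hyr⟩ := p.exists_adj_mem_componentIn (fun w hw => hp w (by simp [hw])) hbr
    have hb : b ∈ G.componentIn (S \ {r}) x :=
      mem_componentIn_of_adj (mem_componentIn_self hxD) ⟨hp b (by simp), hbr⟩ hxb
    exact ⟨y, componentIn_eq_of_mem hb ▸ hy, hyr⟩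

lemma Connected.exists_adj_mem_componentIn (hS : (G.induce S).Connected) (hr : r ∈ S)
    (hx : x ∈ S \ {r}) : ∃ y ∈ G.componentIn (S \ {r}) x, G.Adj y r := by
  obtain ⟨p, hp⟩ := hS.mem_componentIn hx.1 hr
  exact p.exists_adj_mem_componentIn hp hx.2

lemma Connected.induce_diff_componentIn (hS : (G.induce S).Connected) (hr : r ∈ S)
    (hy : y ∈ S \ {r}) : (G.induce (S \ G.componentIn (S \ {r}) y)).Connected := by
  have hrC : r ∉ G.componentIn (S \ {r}) y := fun h => (componentIn_subset h).2 rfl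
  refine induce_connected_of_patches r ⟨hr, hrC⟩ fun {v} hv => ?_
  by_cases hvr : v = r
  · subst hvr
    exact ⟨{v}, singleton_subset_iff.2 hv, rfl, rfl, .refl _⟩
  have hvD : v ∈ S \ {r} := ⟨hv.1, hvr⟩
  obtain ⟨z, hz, hzr⟩ := hS.exists_adj_mem_componentIn hr hvD
  have hsub : {r} ∪ G.componentIn (S \ {r}) v ⊆ S \ G.componentIn (S \ {r}) y := by
    refine union_subset (singleton_subset_iff.2 ⟨hr, hrC⟩) fun w hw =>
      ⟨(componentIn_subset hw).1, fun hwy => hv.2 ?_⟩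
    rw [← componentIn_eq_of_mem hwy, componentIn_eq_of_mem hw]
    exact mem_componentIn_self hvD
  have hconn := connected_induce_union Preconnected.of_subsingleton
    (connected_induce_componentIn hvD).preconnected (mem_singleton r) hz hzr.symm
  exact ⟨_, hsub, Or.inl rfl, Or.inr (mem_componentIn_self hvD), hconn.preconnected _ _⟩

lemma Connected.exists_adj_of_diff_nonempty (hA : (G.induce A).Connected)
    (hSA : S ⊆ A) (hS : S.Nonempty) (hAS : (A \ S).Nonempty) :
    ∃ r ∈ S, ∃ b ∈ A \ S, G.Adj r b := by
  obtain ⟨s, hs⟩ := hS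
  obtain ⟨a, ha⟩ := hAS
  obtain ⟨p, hp⟩ := hA.mem_componentIn (hSA hs) ha.1
  obtain ⟨d, hd, hd1, hd2⟩ := p.exists_boundary_dart S hs ha.2
  exact ⟨d.fst, hd1, d.snd, ⟨hp _ (p.dart_snd_mem_support_of_mem_darts hd), hd2⟩, d.adj⟩

lemma Connected.ncard_le_of_ncard_componentIn_le [Finite V] {m : ℕ}
    (hS : (G.induce S).Connected) (hr : r ∈ S) (hdeg : (G.neighborSet r).ncard ≤ q)
    (hsmall : ∀ y ∈ S \ {r}, (G.componentIn (S \ {r}) y).ncard ≤ m) :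
    S.ncard ≤ q * m + 1 := by
  set D := S \ {r}
  set t := (toFinite (G.neighborSet r ∩ D)).toFinset
  have ht : ∀ y, y ∈ t ↔ y ∈ G.neighborSet r ∩ D := fun y => Finite.mem_toFinset _
  have hcover : D ⊆ ⋃ y ∈ t, G.componentIn D y := by
    intro x hx
    obtain ⟨y, hy, hyr⟩ := hS.exists_adj_mem_componentIn hr hx
    rw [mem_iUnion₂]
    refine ⟨y, (ht y).2 ⟨hyr.symm, componentIn_subset hy⟩, ?_⟩
    exact componentIn_eq_of_mem hy ▸ mem_componentIn_self hx
  have hD : D.ncard ≤ q * m := calc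
    D.ncard ≤ (⋃ y ∈ t, G.componentIn D y).ncard := ncard_le_ncard hcover (toFinite _)
    _ ≤ ∑ y ∈ t, (G.componentIn D y).ncard := t.set_ncard_biUnion_le _
    _ ≤ t.card * m := by
      simpa using Finset.sum_le_card_nsmul t _ m fun y hy => hsmall y ((ht y).1 hy).2
    _ ≤ q * m := by
      gcongr
      rw [← ncard_eq_toFinset_card _]
      exact (ncard_le_ncard inter_subset_left).trans hdeg
  calc S.ncard = D.ncard + 1 := (ncard_sdiff_singleton_add_one hr).symm
    _ ≤ q * m + 1 := by omega

def IsDetachable (G : SimpleGraph V) (A : Set V) (M : ℕ) (S : Set V) : Prop :=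
  S ⊆ A ∧ (G.induce S).Connected ∧ M ≤ S.ncard ∧ (S = A ∨ (G.induce (A \ S)).Connected)

lemma IsDetachable.ncard_le_of_minimal [Finite V] (hdeg : ∀ v, (G.neighborSet v).ncard ≤ q)
    (hA : (G.induce A).Connected) (hS : G.IsDetachable A M S)
    (hmin : ∀ T, G.IsDetachable A M T → S.ncard ≤ T.ncard) :
    S.ncard ≤ q * (M - 1) + 1 := by
  obtain ⟨hSA, hSconn, -, hrest⟩ := hS
  obtain ⟨r, hr, hcut⟩ : ∃ r ∈ S,
      S = A ∨ ((G.induce (A \ S)).Connected ∧ ∃ b ∈ A \ S, G.Adj b r) := by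
    rcases hrest with rfl | hAS
    · obtain ⟨⟨r, hr⟩⟩ := hSconn.nonempty
      exact ⟨r, hr, Or.inl rfl⟩
    obtain ⟨r, hr, b, hb, hrb⟩ := hA.exists_adj_of_diff_nonempty hSA
      (nonempty_coe_sort.1 hSconn.nonempty) (nonempty_coe_sort.1 hAS.nonempty)
    exact ⟨r, hr, Or.inr ⟨hAS, b, hb, hrb.symm⟩⟩
  refine hSconn.ncard_le_of_ncard_componentIn_le hr (hdeg r) fun y hy => ?_
  set C := G.componentIn (S \ {r}) y
  have hCS : C ⊆ S := componentIn_subset.trans sdiff_subset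
  have hrC : r ∉ C := fun h => (componentIn_subset h).2 rfl
  have hSC := hSconn.induce_diff_componentIn hr hy
  by_contra! hbig
  have hC : G.IsDetachable A M C := by
    refine ⟨hCS.trans hSA, connected_induce_componentIn hy, by omega, Or.inr ?_⟩
    rcases hcut with rfl | ⟨hAS, b, hb, hbr⟩
    · exact hSC
    rw [← sdiff_union_sdiff_cancel hSA hCS]
    exact connected_induce_union hAS.preconnected hSC.preconnected hb ⟨hr, hrC⟩ hbr
  have := hmin C hC
  have := ncard_lt_ncard (ssubset_of_subset_of_ne hCS fun h => hrC (h ▸ hr))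
  omega

theorem exists_isDetachable_ncard_le [Finite V] (hdeg : ∀ v, (G.neighborSet v).ncard ≤ q)
    (hA : (G.induce A).Connected) (hMA : M ≤ A.ncard) :
    ∃ S, G.IsDetachable A M S ∧ S.ncard ≤ q * (M - 1) + 1 := by
  obtain ⟨S, hS, hmin⟩ := exists_min_image {S | G.IsDetachable A M S} ncard (toFinite _)
    ⟨A, subset_rfl, hA, hMA, Or.inl rfl⟩
  exact ⟨S, hS, hS.ncard_le_of_minimal hdeg hA hmin⟩

theorem exists_partition_of_connected_induce [Finite V] (hq : 1 ≤ q) (hM : 1 ≤ M)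
    (hdeg : ∀ v, (G.neighborSet v).ncard ≤ q) (hA : (G.induce A).Connected)
    (hMA : M ≤ A.ncard) :
    ∃ P : Set (Set V), P.PairwiseDisjoint id ∧ ⋃₀ P = A ∧
      ∀ B ∈ P, (G.induce B).Connected ∧ M ≤ B.ncard ∧ B.ncard ≤ 2 * q * M := by
  induction hn : A.ncard using Nat.strong_induction_on generalizing A with
  | _ n ih =>
  by_cases hsmall : n ≤ 2 * q * M
  · refine ⟨{A}, pairwiseDisjoint_singleton _ _, sUnion_singleton A, ?_⟩
    rintro B rfl
    exact ⟨hA, hMA, hn ▸ hsmall⟩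
  obtain ⟨S, ⟨hSA, hSconn, hMS, hrest⟩, hSq⟩ := exists_isDetachable_ncard_le hdeg hA hMA
  have hqM : q * (M - 1) + 1 ≤ q * M := by
    have : q ≤ q * M := Nat.le_mul_of_pos_right q hM
    rw [Nat.mul_sub_one]
    omega
  have h2qM : 2 * q * M = q * M + q * M := by ring
  have hSA' : S ≠ A := by
    rintro rfl
    omega
  have hdiff : (A \ S).ncard = n - S.ncard := hn ▸ ncard_sdiff hSA
  obtain ⟨P, hPdisj, hPA, hP⟩ :=
    ih _ (by omega) (hrest.resolve_left hSA') (by omega) rfl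
  refine ⟨insert S P, hPdisj.insert fun B hB _ => ?_, by rw [sUnion_insert, hPA,
    union_sdiff_cancel hSA], forall_mem_insert.2 ⟨⟨hSconn, hMS, by omega⟩, hP⟩⟩
  exact disjoint_sdiff_right.mono_right (hPA ▸ subset_sUnion_of_mem hB)

end SimpleGraph

open SimpleGraph in
theorem partition_connected_graph_bounded_pieces
    {V : Type} [Fintype V] (G : SimpleGraph V) (q M : ℕ)
    (hq : 1 ≤ q) (hM : 2 ≤ M)
    (hconn : G.Connected)
    (hdeg : ∀ v : V, Nat.card (G.neighborSet v) ≤ q)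
    (hMV : M ≤ Fintype.card V) :
    ∃ P : Set (Set V), Setoid.IsPartition P ∧
      ∀ A ∈ P, (G.induce A).Connected ∧
        M ≤ Nat.card A ∧ Nat.card A ≤ 2 * q * M := by
  obtain ⟨P, hPdisj, hPV, hP⟩ := exists_partition_of_connected_induce hq (by omega : 1 ≤ M)
    (fun v => Nat.card_coe_set_eq (G.neighborSet v) ▸ hdeg v)
    (G.induceUnivIso.connected_iff.2 hconn) (by rwa [ncard_univ, Nat.card_eq_fintype_card])
  refine ⟨P, hPdisj.isPartition_of_exists_of_ne_empty (fun a => ?_) fun h => ?_, fun A hA => ?_⟩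
  · exact mem_sUnion.1 (hPV ▸ mem_univ a)
  · have := ncard_empty V ▸ (hP ∅ h).2.1
    omega
  · simpa only [Nat.card_coe_set_eq] using hP A hA
end

section
/- Let q ≥ 1 and M ≥ 2 be natural numbers, and let G be a connected simple graph on an infinite vertex type V such that every vertex of G has a finite neighbor set of cardinality at most q. Then there exists a partition of V into (necessarily infinitely many) nonempty finite sets such that each part induces a connected subgraph of G and each part has cardinality at least M and at most 2qM². -/
/-!
Call a nonempty `S` disjoint from `K` an island off `K` if every neighbour of `S` lies in `S ∪ K`.
Pieces are added one at a time, keeping every finite island off the covered set `K` of size at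
least `M`. Under this invariant a connected set `A₀ ∋ v` of exactly `M` uncovered vertices can be
grown greedily from any uncovered `v`. The components of the complement of `A₀ ∪ K` with fewer than
`M` vertices each touch `A₀`, since otherwise they would be small islands off `K`, and being
disjoint they touch it at distinct neighbours of `A₀`. So there are at most `qM` of them, and
adding them to `A₀` gives a connected piece of at most `M + qM·M ≤ 2qM²` vertices that restores
the invariant. The invariant passes to unions of chains because a finite island sees only finitely
many covered vertices, and it holds for `K = ∅` because `G` is connected and infinite; hence a
maximal family of pieces, which exists by Zorn's lemma, covers `V`.
-/

open Set

theorem Set.ncard_biUnion_le_ncard_mul {ι α : Type*} {s : Set ι} (hs : s.Finite) (t : ι → Set α)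
    {n : ℕ} (h : ∀ i ∈ s, (t i).ncard ≤ n) : (⋃ i ∈ s, t i).ncard ≤ s.ncard * n := by
  lift s to Finset ι using hs
  rw [Finset.set_biUnion_coe, ncard_coe_finset]
  calc _ ≤ ∑ i ∈ s, (t i).ncard := s.set_ncard_biUnion_le t
    _ ≤ s.card * n := by simpa using s.sum_le_card_nsmul _ n h

namespace SimpleGraph

variable {V : Type*} {G : SimpleGraph V}

def IsIsland (G : SimpleGraph V) (K S : Set V) : Prop :=
  S.Nonempty ∧ Disjoint S K ∧ ∀ x ∈ S, G.neighborSet x ⊆ S ∪ K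

def NoSmallIsland (G : SimpleGraph V) (M : ℕ) (K : Set V) : Prop :=
  ∀ S, G.IsIsland K S → S.Finite → M ≤ S.ncard

theorem Walk.end_mem_of_neighborSet_subset {K S : Set V}
    (hS : ∀ x ∈ S, G.neighborSet x ⊆ S ∪ K) {u w : V} (p : G.Walk u w)
    (hp : ∀ z ∈ p.support, z ∉ K) (hu : u ∈ S) : w ∈ S := by
  by_contra hw
  obtain ⟨d, hd, hfst, hsnd⟩ := p.exists_boundary_dart S hu hw
  rcases hS _ hfst d.adj with h | h
  · exact hsnd h
  · exact hp _ (p.dart_snd_mem_support_of_mem_darts hd) h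

theorem noSmallIsland_empty [Infinite V] (hG : G.Connected) (M : ℕ) : G.NoSmallIsland M ∅ := by
  rintro S ⟨⟨u, hu⟩, -, hS⟩ hfin
  have : S = univ := eq_univ_of_forall fun w =>
    (hG u w).some.end_mem_of_neighborSet_subset hS (fun _ _ => notMem_empty _) hu
  exact absurd (this ▸ hfin) infinite_univ

namespace ComponentCompl

variable {K : Set V} (C : G.ComponentCompl K)

theorem neighborSet_subset {x : V} (hx : x ∈ C) : G.neighborSet x ⊆ C ∪ K := fun y hy => by
  by_cases hyK : y ∈ K
  · exact Or.inr hyK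
  · exact Or.inl (mem_of_adj x y hx hyK hy)

theorem exists_walk {x w : V} (hx : x ∈ C) (hw : w ∈ C) :
    ∃ p : G.Walk x w, ∀ z ∈ p.support, z ∉ K := by
  obtain ⟨hxK, rfl⟩ := hx
  obtain ⟨hwK, hwC⟩ := hw
  obtain ⟨p⟩ := (ConnectedComponent.exact hwC).symm
  have hp : ∀ z ∈ (p.map (Embedding.induce Kᶜ).toHom).support, z ∉ K := fun _ hz => by
    rw [Walk.support_map, List.mem_map] at hz
    obtain ⟨z, -, rfl⟩ := hz
    exact z.2
  exact ⟨_, hp⟩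

theorem subset_of_neighborSet_subset {S : Set V} (hS : ∀ x ∈ S, G.neighborSet x ⊆ S ∪ K)
    {x : V} (hxC : x ∈ C) (hxS : x ∈ S) : (C : Set V) ⊆ S := fun w hw => by
  obtain ⟨p, hp⟩ := C.exists_walk hxC hw
  exact p.end_mem_of_neighborSet_subset hS hp hxS

theorem connected_induce : (G.induce (C : Set V)).Connected := by
  classical
  obtain ⟨v, hv⟩ := C.nonempty
  refine induce_connected_of_patches v hv fun {w} hw => ?_
  obtain ⟨p, hp⟩ := C.exists_walk hv hw
  refine ⟨{z | z ∈ p.support}, fun z hz => ?_, p.start_mem_support, p.end_mem_support,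
    p.connected_induce_support.preconnected _ _⟩
  exact (p.takeUntil z hz).end_mem_of_neighborSet_subset (fun _ => C.neighborSet_subset)
    (fun y hy => hp y (p.support_takeUntil_subset_support hz hy)) hv

end ComponentCompl

theorem connected_induce_union_biUnion {s : Set V} (hs : (G.induce s).Connected) {ι : Type*}
    {I : Set ι} {t : ι → Set V} (ht : ∀ i ∈ I, (G.induce (t i)).Connected)
    (hadj : ∀ i ∈ I, ∃ b ∈ t i, ∃ a ∈ s, G.Adj a b) :
    (G.induce (s ∪ ⋃ i ∈ I, t i)).Connected := by
  obtain ⟨u, hu⟩ := hs.nonempty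
  refine induce_connected_of_patches u (Or.inl hu) fun {w} hw => ?_
  rcases hw with hw | hw
  · exact ⟨s, subset_union_left, hu, hw, hs.preconnected _ _⟩
  · obtain ⟨i, hi, hwi⟩ := mem_iUnion₂.1 hw
    obtain ⟨b, hb, a, ha, hab⟩ := hadj i hi
    exact ⟨s ∪ t i, union_subset_union_right s (subset_biUnion_of_mem hi), Or.inl hu, Or.inr hwi,
      (connected_induce_union hs.preconnected (ht i hi).preconnected ha hb hab).preconnected _ _⟩

def smallComponents (G : SimpleGraph V) (M : ℕ) (L : Set V) : Set (G.ComponentCompl L) :=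
  {D | (D : Set V).Finite ∧ (D : Set V).ncard < M}

theorem noSmallIsland_biUnion_smallComponents_union (M : ℕ) (L : Set V) :
    G.NoSmallIsland M ((⋃ D ∈ G.smallComponents M L, (D : Set V)) ∪ L) := by
  rintro S ⟨⟨x, hx⟩, hdisj, hS⟩ hfin
  by_contra! hsmall
  have notMem_L : ∀ y ∈ S, y ∉ L := fun y hy hyL => Set.disjoint_left.1 hdisj hy (Or.inr hyL)
  -- A small component adjacent to `S` would contain the neighbouring vertex of `S`.
  have hSL : ∀ y ∈ S, G.neighborSet y ⊆ S ∪ L := fun y hy z hz => by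
    rcases hS y hy hz with hzS | hzU | hzL
    · exact Or.inl hzS
    · obtain ⟨D, hD, hzD⟩ := mem_iUnion₂.1 hzU
      have hyD := ComponentCompl.mem_of_adj z y hzD (notMem_L y hy) hz.symm
      exact absurd (Or.inl (mem_biUnion hD hyD)) (Set.disjoint_left.1 hdisj hy)
    · exact Or.inr hzL
  set D := G.componentComplMk (notMem_L x hx)
  have hDS : (D : Set V) ⊆ S :=
    D.subset_of_neighborSet_subset hSL (G.componentComplMk_mem _) hx
  have hD : D ∈ G.smallComponents M L :=
    ⟨hfin.subset hDS, (ncard_le_ncard hDS hfin).trans_lt hsmall⟩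
  exact Set.disjoint_left.1 hdisj hx (Or.inl (mem_biUnion hD (G.componentComplMk_mem _)))

def IsPiece (G : SimpleGraph V) (q M : ℕ) (A : Set V) : Prop :=
  A.Finite ∧ (G.induce A).Connected ∧ M ≤ A.ncard ∧ A.ncard ≤ 2 * q * M ^ 2

namespace NoSmallIsland

variable {M : ℕ} {K : Set V}

theorem exists_adj_notMem (h : G.NoSmallIsland M K) {t : Set V} (hne : t.Nonempty)
    (hfin : t.Finite) (hdisj : Disjoint t K) (hsmall : t.ncard < M) :
    ∃ x ∈ t, ∃ y, G.Adj x y ∧ y ∉ t ∧ y ∉ K := by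
  by_contra! hfenced
  refine (h t ⟨hne, hdisj, fun x hx y hy => ?_⟩ hfin).not_gt hsmall
  by_contra hyt
  exact hyt (Or.inr (hfenced x hx y hy fun h => hyt (Or.inl h)))

theorem exists_connected_ncard_eq (h : G.NoSmallIsland M K) {v : V} (hv : v ∉ K) {n : ℕ}
    (hn : 1 ≤ n) (hnM : n ≤ M) :
    ∃ t, v ∈ t ∧ Disjoint t K ∧ t.Finite ∧ (G.induce t).Connected ∧ t.ncard = n := by
  induction n, hn using Nat.le_induction with
  | base =>
    exact ⟨{v}, rfl, disjoint_singleton_left.2 hv, finite_singleton v,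
      Connected.of_subsingleton, ncard_singleton v⟩
  | succ n hn ih =>
    obtain ⟨t, hvt, hdisj, hfin, hconn, rfl⟩ := ih (by omega)
    obtain ⟨x, hx, y, hxy, hyt, hyK⟩ := h.exists_adj_notMem ⟨v, hvt⟩ hfin hdisj (by omega)
    refine ⟨insert y t, mem_insert_of_mem y hvt, disjoint_insert_left.2 ⟨hyK, hdisj⟩,
      hfin.insert y, ?_, ncard_insert_of_notMem hyt hfin⟩
    rw [insert_eq, union_comm]
    exact connected_induce_union hconn.preconnected Connected.of_subsingleton.preconnected
      hx rfl hxy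

theorem sUnion (hloc : ∀ v, (G.neighborSet v).Finite) {𝒦 : Set (Set V)}
    (hdir : DirectedOn (· ⊆ ·) 𝒦) (hne : 𝒦.Nonempty) (h : ∀ K ∈ 𝒦, G.NoSmallIsland M K) :
    G.NoSmallIsland M (⋃₀ 𝒦) := by
  rintro S ⟨hSne, hdisj, hS⟩ hfin
  obtain ⟨K, hK𝒦, hK⟩ := hdir.exists_mem_subset_of_finite_of_subset_sUnion hne
    ((hfin.biUnion fun x _ => hloc x).inter_of_right (⋃₀ 𝒦)) inter_subset_left
  refine h K hK𝒦 S ⟨hSne, hdisj.mono_right (subset_sUnion_of_mem hK𝒦), fun x hx y hy => ?_⟩ hfin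
  rcases hS x hx hy with hyS | hy𝒦
  · exact Or.inl hyS
  · exact Or.inr (hK ⟨hy𝒦, mem_biUnion hx hy⟩)

theorem exists_adj_of_mem_smallComponents (h : G.NoSmallIsland M K) {A : Set V}
    {D : G.ComponentCompl (A ∪ K)} (hD : D ∈ G.smallComponents M (A ∪ K)) :
    ∃ x ∈ D, ∃ a ∈ A, G.Adj a x := by
  by_contra! hnadj
  refine (h D ⟨D.nonempty, (D.disjoint_right.mono_left subset_union_right).symm,
    fun x hx y hy => ?_⟩ hD.1).not_gt hD.2
  rcases D.neighborSet_subset hx hy with hyD | hyA | hyK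
  · exact Or.inl hyD
  · exact absurd hy.symm (hnadj x hx y hyA)
  · exact Or.inr hyK

theorem exists_injOn_smallComponents (h : G.NoSmallIsland M K) (A : Set V) :
    ∃ f : G.ComponentCompl (A ∪ K) → V,
      MapsTo f (G.smallComponents M (A ∪ K)) (⋃ a ∈ A, G.neighborSet a) ∧
      InjOn f (G.smallComponents M (A ∪ K)) := by
  have hpick : ∀ D : G.ComponentCompl (A ∪ K), ∃ x ∈ D,
      D ∈ G.smallComponents M (A ∪ K) → ∃ a ∈ A, G.Adj a x := fun D => by
    by_cases hD : D ∈ G.smallComponents M (A ∪ K)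
    · obtain ⟨x, hx, hadj⟩ := h.exists_adj_of_mem_smallComponents hD
      exact ⟨x, hx, fun _ => hadj⟩
    · obtain ⟨x, hx⟩ := D.nonempty
      exact ⟨x, hx, fun h => absurd h hD⟩
  choose f hfD hadj using hpick
  refine ⟨f, fun D hD => ?_, fun D _ E _ hDE => ?_⟩
  · obtain ⟨a, ha, hadj⟩ := hadj D hD
    exact mem_biUnion ha hadj
  by_contra hne
  exact Set.disjoint_left.1 (ComponentCompl.pairwise_disjoint hne) (hfD D) (hDE ▸ hfD E)

theorem exists_isPiece (h : G.NoSmallIsland M K) (hloc : ∀ v, (G.neighborSet v).Finite)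
    {q : ℕ} (hdeg : ∀ v, (G.neighborSet v).ncard ≤ q) (hq : 1 ≤ q) (hM : 1 ≤ M) {v : V}
    (hv : v ∉ K) : ∃ A, v ∈ A ∧ Disjoint A K ∧ G.IsPiece q M A ∧ G.NoSmallIsland M (A ∪ K) := by
  obtain ⟨A₀, hvA₀, hA₀K, hA₀fin, hA₀conn, hA₀card⟩ := h.exists_connected_ncard_eq hv hM le_rfl
  set 𝒮 := G.smallComponents M (A₀ ∪ K)
  set U := ⋃ D ∈ 𝒮, (D : Set V)
  obtain ⟨f, hfmaps, hfinj⟩ := h.exists_injOn_smallComponents A₀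
  have hN : (⋃ a ∈ A₀, G.neighborSet a).Finite := hA₀fin.biUnion fun a _ => hloc a
  have h𝒮fin : 𝒮.Finite := Finite.of_injOn hfmaps hfinj hN
  have hUfin : U.Finite := h𝒮fin.biUnion fun D hD => hD.1
  have h𝒮card : 𝒮.ncard ≤ M * q := calc
    𝒮.ncard ≤ (⋃ a ∈ A₀, G.neighborSet a).ncard := ncard_le_ncard_of_injOn f hfmaps hfinj hN
    _ ≤ A₀.ncard * q := ncard_biUnion_le_ncard_mul hA₀fin _ fun a _ => hdeg a
    _ = M * q := by rw [hA₀card]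
  have hUcard : U.ncard ≤ M * q * M := calc
    U.ncard ≤ 𝒮.ncard * M := ncard_biUnion_le_ncard_mul h𝒮fin _ fun D hD => hD.2.le
    _ ≤ M * q * M := Nat.mul_le_mul_right M h𝒮card
  refine ⟨A₀ ∪ U, Or.inl hvA₀, disjoint_union_left.2 ⟨hA₀K, ?_⟩,
    ⟨hA₀fin.union hUfin, ?_, ?_, ?_⟩, ?_⟩
  · exact disjoint_iUnion₂_left.2 fun D _ => (D.disjoint_right.mono_left subset_union_right).symm
  · exact connected_induce_union_biUnion hA₀conn (fun D _ => D.connected_induce)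
      fun D hD => h.exists_adj_of_mem_smallComponents hD
  · exact hA₀card ▸ ncard_le_ncard subset_union_left (hA₀fin.union hUfin)
  · calc (A₀ ∪ U).ncard ≤ A₀.ncard + U.ncard := ncard_union_le _ _
      _ ≤ M + M * q * M := by omega
      _ ≤ 2 * q * M ^ 2 := by nlinarith
  · have := noSmallIsland_biUnion_smallComponents_union (G := G) M (A₀ ∪ K)
    rwa [← union_assoc, union_comm U A₀] at this

end NoSmallIsland

def partialPiecePartitions (G : SimpleGraph V) (q M : ℕ) : Set (Set (Set V)) :=
  {P | (∀ A ∈ P, G.IsPiece q M A) ∧ P.PairwiseDisjoint id ∧ G.NoSmallIsland M (⋃₀ P)}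

theorem empty_mem_partialPiecePartitions [Infinite V] (hG : G.Connected) (q M : ℕ) :
    ∅ ∈ G.partialPiecePartitions q M :=
  ⟨fun _ h => absurd h (notMem_empty _), pairwiseDisjoint_empty, by
    simpa only [sUnion_empty] using noSmallIsland_empty hG M⟩

theorem sUnion_mem_partialPiecePartitions (hloc : ∀ v, (G.neighborSet v).Finite) {q M : ℕ}
    {c : Set (Set (Set V))} (hc : c ⊆ G.partialPiecePartitions q M)
    (hchain : IsChain (· ⊆ ·) c) (hne : c.Nonempty) :
    ⋃₀ c ∈ G.partialPiecePartitions q M := by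
  refine ⟨fun A ⟨P, hP, hA⟩ => (hc hP).1 A hA,
    (hchain.pairwiseDisjoint_sUnion id).2 fun P hP => (hc hP).2.1, ?_⟩
  have := NoSmallIsland.sUnion hloc
    (directedOn_image.2 (hchain.mono_rel fun _ _ => sUnion_mono).directedOn) (hne.image sUnion)
    (forall_mem_image.2 fun P hP => (hc hP).2.2)
  have hunion : ⋃ P ∈ c, ⋃₀ P = ⋃₀ ⋃₀ c := by
    simp only [sUnion_eq_biUnion, biUnion_iUnion]
  rwa [sUnion_image, hunion] at this

theorem exists_insert_mem_partialPiecePartitions (hloc : ∀ v, (G.neighborSet v).Finite)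
    {q M : ℕ} (hdeg : ∀ v, (G.neighborSet v).ncard ≤ q) (hq : 1 ≤ q) (hM : 1 ≤ M)
    {P : Set (Set V)} (hP : P ∈ G.partialPiecePartitions q M) {v : V} (hv : v ∉ ⋃₀ P) :
    ∃ A, v ∈ A ∧ insert A P ∈ G.partialPiecePartitions q M := by
  obtain ⟨A, hvA, hAP, hA, hAisl⟩ := hP.2.2.exists_isPiece hloc hdeg hq hM hv
  refine ⟨A, hvA, forall_mem_insert.2 ⟨hA, hP.1⟩,
    hP.2.1.insert fun B hB _ => hAP.mono_right (subset_sUnion_of_mem hB), ?_⟩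
  rwa [sUnion_insert]

end SimpleGraph

open SimpleGraph in
theorem partition_infinite_connected_graph_bounded_pieces
    {V : Type} [Infinite V] (G : SimpleGraph V) (q M : ℕ)
    (hq : 1 ≤ q) (hM : 2 ≤ M)
    (hconn : G.Connected)
    (hfin : ∀ v : V, (G.neighborSet v).Finite)
    (hdeg : ∀ v : V, Nat.card (G.neighborSet v) ≤ q) :
    ∃ P : Set (Set V), Setoid.IsPartition P ∧
      ∀ A ∈ P, A.Finite ∧ (G.induce A).Connected ∧
        M ≤ Nat.card A ∧ Nat.card A ≤ 2 * q * M ^ 2 := by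
  obtain ⟨P, -, hmax⟩ := zorn_subset_nonempty (G.partialPiecePartitions q M)
    (fun c hc hchain hne => ⟨⋃₀ c, sUnion_mem_partialPiecePartitions hfin hc hchain hne,
      fun _ => subset_sUnion_of_mem⟩) ∅ (empty_mem_partialPiecePartitions hconn q M)
  obtain ⟨hpiece, hdisj, -⟩ := hmax.prop
  have hcover : ∀ v, ∃ A ∈ P, v ∈ A := fun v => by
    by_contra hv
    obtain ⟨A, hvA, hins⟩ := exists_insert_mem_partialPiecePartitions hfin
      (fun v => Nat.card_coe_set_eq (G.neighborSet v) ▸ hdeg v) hq (by omega) hmax.prop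
      (mt mem_sUnion.1 hv)
    exact hv ⟨A, hmax.2 hins (subset_insert A P) (mem_insert A P), hvA⟩
  refine ⟨P, hdisj.isPartition_of_exists_of_ne_empty hcover fun hempty => ?_, fun A hA => ?_⟩
  · have := (hpiece ∅ hempty).2.2.1
    rw [ncard_empty] at this
    omega
  · rw [Nat.card_coe_set_eq]
    exact hpiece A hA
end
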